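/- arXiv:0812.4047 — 3 statements merged into one kernel-verified Lean document; each statement's English description precedes it below -/
import Mathlib

section
/- For every integer p ≥ 1 and every m ≥ 0, the exponential generating function of the m-th column of the p-th power of the Stirling matrix satisfies, in the ring of formal power series ℝ⟦X⟧: Σ_{n=0}^∞ S^p_{n,m}·X^n/n! = (σ^p)^m/m!, where σ^p is the p-fold compositional iterate of exp(X) − 1. -/
/-!
Since `[X^n] (exp X - 1)^k = k! S(n,k) / n!`, substituting `exp X - 1` into an exponential
generating function multiplies its coefficient sequence by the Stirling matrix. The coefficient
formula is the Stirling recurrence read off from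
`((exp X - 1)^(k+1))' = (k+1) ((exp X - 1)^(k+1) + (exp X - 1)^k)`. Hence the column EGFs of
`S^(p+1)` are those of `S^p` composed with `exp X - 1`, and induction on `p` from
`σ^1 = exp X - 1` gives the claim.
-/

/-- Stirling numbers of the second kind. -/
def S2 : ℕ → ℕ → ℕ
  | 0, 0 => 1
  | 0, _ + 1 => 0
  | _ + 1, 0 => 0
  | n + 1, m + 1 => (m + 1) * S2 n (m + 1) + S2 n m

/-- Entries `S^p_{n,m}` of the `p`-th power of the Stirling matrix (for `p ≥ 1`;
the value at `p = 0` is junk). -/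
def Sp : ℕ → ℕ → ℕ → ℕ
  | 0, _, _ => 0
  | 1, n, m => S2 n m
  | p + 2, n, m => ∑ k ∈ Finset.range (n + 1), S2 n k * Sp (p + 1) k m

/-- Composition `f ∘ g` of formal power series (the intended meaning when `g` has zero
constant term, in which case `coeff n (g ^ k) = 0` for `k > n`). -/
noncomputable def PSComp (f g : PowerSeries ℝ) : PowerSeries ℝ :=
  PowerSeries.mk fun n =>
    ∑ k ∈ Finset.range (n + 1), (PowerSeries.coeff (R := ℝ) k f) * (PowerSeries.coeff (R := ℝ) n (g ^ k))

/-- `σ^p`, the `p`-fold compositional iterate of `exp X − 1` (with `σ^0 = X`). -/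
noncomputable def sigmaP : ℕ → PowerSeries ℝ
  | 0 => PowerSeries.X
  | p + 1 => PSComp (sigmaP p) (PowerSeries.exp ℝ - 1)

open PowerSeries Finset Nat

theorem S2_eq_stirlingSecond : S2 = stirlingSecond := by
  funext n m
  induction n generalizing m with
  | zero => cases m <;> rfl
  | succ n ih => cases m <;> simp [S2, stirlingSecond_succ_succ, ih]

theorem Sp_one (n m : ℕ) : Sp 1 n m = stirlingSecond n m := by
  rw [Sp, S2_eq_stirlingSecond]

theorem Sp_add_two (p n m : ℕ) :
    Sp (p + 2) n m = ∑ k ∈ range (n + 1), stirlingSecond n k * Sp (p + 1) k m := by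
  rw [Sp, S2_eq_stirlingSecond]

theorem coeff_subst_eq_sum_range {R : Type*} [CommRing R] {g : R⟦X⟧}
    (hg : constantCoeff g = 0) (f : R⟦X⟧) (n : ℕ) :
    coeff n (f.subst g) = ∑ d ∈ range (n + 1), coeff d f * coeff n (g ^ d) := by
  rw [coeff_subst' (HasSubst.of_constantCoeff_zero' hg)]
  refine finsum_eq_sum_of_support_subset _ fun d hd => ?_
  by_contra hdn
  have hX : X ^ d ∣ g ^ d := pow_dvd_pow_of_dvd (X_dvd_iff.2 hg) d
  have hlt : n < d := by simpa using hdn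
  simp [X_pow_dvd_iff.1 hX n hlt] at hd

theorem PSComp_eq_subst {g : PowerSeries ℝ} (hg : constantCoeff g = 0) (f : PowerSeries ℝ) :
    PSComp f g = f.subst g := by
  ext n
  rw [PSComp, coeff_mk, coeff_subst_eq_sum_range hg]

section Ring

variable (A : Type*) [CommRing A] [Algebra ℚ A]

theorem constantCoeff_exp_sub_one : constantCoeff (exp A - 1) = 0 := by
  simp

theorem hasSubst_exp_sub_one : HasSubst (exp A - 1) :=
  HasSubst.of_constantCoeff_zero' (constantCoeff_exp_sub_one A)

theorem derivative_exp_sub_one_pow_succ (k : ℕ) :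
    d⁄dX A ((exp A - 1) ^ (k + 1)) = (k + 1 : A) • ((exp A - 1) ^ (k + 1) + (exp A - 1) ^ k) := by
  rw [derivative_pow, map_sub, derivative_exp, derivative_one, sub_zero, smul_eq_C_mul,
    add_tsub_cancel_right, ← map_natCast C]
  push_cast
  ring

end Ring

section Field

variable {K : Type*} [Field K] [CharZero K]

theorem coeff_exp_sub_one_pow (n k : ℕ) :
    coeff n ((exp K - 1) ^ k) = (k ! : K) * stirlingSecond n k / n ! := by
  induction n generalizing k with
  | zero => cases k <;> simp [coeff_zero_eq_constantCoeff]
  | succ n ih =>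
    cases k with
    | zero => simp [coeff_one]
    | succ k =>
      have h := congrArg (coeff n) (derivative_exp_sub_one_pow_succ K k)
      rw [coeff_derivative, coeff_smul, smul_eq_mul, map_add, ih, ih,
        ← eq_div_iff (Nat.cast_add_one_ne_zero n)] at h
      rw [h, stirlingSecond_succ_succ, factorial_succ, factorial_succ]
      push_cast
      field_simp

theorem mk_div_factorial_subst_exp_sub_one (a : ℕ → K) :
    (mk fun k => a k / k !).subst (exp K - 1) =
      mk fun n => (∑ k ∈ range (n + 1), stirlingSecond n k * a k) / n ! := by
  ext n
  rw [coeff_subst_eq_sum_range (constantCoeff_exp_sub_one K), coeff_mk, sum_div]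
  refine sum_congr rfl fun k _ => ?_
  have : (k ! : K) ≠ 0 := Nat.cast_ne_zero.2 (factorial_ne_zero k)
  rw [coeff_mk, coeff_exp_sub_one_pow]
  field_simp

end Field

theorem sigmaP_succ (p : ℕ) : sigmaP (p + 1) = (sigmaP p).subst (exp ℝ - 1) :=
  PSComp_eq_subst (constantCoeff_exp_sub_one ℝ) _

theorem sigmaP_one : sigmaP 1 = exp ℝ - 1 := by
  rw [sigmaP_succ, sigmaP, subst_X (hasSubst_exp_sub_one ℝ)]

/-- The EGF of the `m`-th column of the `p`-th power of the Stirling matrix is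
`(σ^p)^m / m!`. -/
theorem egf_column_Stirling_power (p m : ℕ) (hp : 1 ≤ p) :
    (PowerSeries.mk fun n => (Sp p n m : ℝ) / n.factorial) =
      PowerSeries.C (R := ℝ) (1 / m.factorial) * (sigmaP p) ^ m := by
  induction p, hp using Nat.le_induction generalizing m with
  | base =>
    ext n
    rw [sigmaP_one, coeff_mk, coeff_C_mul, coeff_exp_sub_one_pow, Sp_one]
    field_simp
  | succ p hp ih =>
    obtain ⟨q, rfl⟩ : ∃ q, p = q + 1 := ⟨p - 1, by omega⟩
    have hτ := hasSubst_exp_sub_one ℝ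
    calc (mk fun n => (Sp (q + 2) n m : ℝ) / n !)
        = (mk fun k => (Sp (q + 1) k m : ℝ) / k !).subst (exp ℝ - 1) := by
          simp [mk_div_factorial_subst_exp_sub_one, Sp_add_two]
      _ = C (1 / (m ! : ℝ)) * (sigmaP (q + 2)) ^ m := by
          rw [ih, ← smul_eq_C_mul, subst_smul hτ, subst_pow hτ, ← sigmaP_succ, smul_eq_C_mul]
end

section
/- For every integer p ≥ 1, every n ≥ 0, and every real x, the higher order Fubini polynomial satisfies F_n^p(x) = Σ_{k=0}^n A^p_{n,k}·(x+1)^k·x^{n−k}. -/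
/-- Higher order Eulerian numbers:
`A^p_{n,m} = ∑_{k=0}^n k!·S^p_{n,k}·C(n-k,m)·(-1)^{n-k-m}` (the terms with `m > n-k`
vanish since then the binomial coefficient is zero). -/
def EulerNum (p n m : ℕ) : ℤ :=
  ∑ k ∈ Finset.range (n + 1),
    (k.factorial * Sp p n k : ℤ) * ((n - k).choose m) * (-1) ^ (n - k - m)

/-- Higher order Fubini polynomials: `F_n^p(x) = ∑_{m=0}^n S^p_{n,m} m! x^m`. -/
noncomputable def FubPoly (p n : ℕ) (x : ℝ) : ℝ :=
  ∑ m ∈ Finset.range (n + 1), (Sp p n m : ℝ) * m.factorial * x ^ m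

/-! Expanding `x ^ j = x ^ j * ((x + 1) - x) ^ (n - j)` by the binomial theorem writes each
monomial `x ^ j` of the Fubini polynomial in the basis `(x + 1) ^ k * x ^ (n - k)`; the
coefficient of `(x + 1) ^ k * x ^ (n - k)` collected over `j` is exactly `A^p_{n,k}`. -/

open Finset

section Binomial

variable {R : Type*} [CommRing R]

theorem sum_choose_mul_neg_one_pow_mul_add_one_pow_mul_pow (x : R) (N : ℕ) :
    ∑ k ∈ range (N + 1), (N.choose k : R) * (-1) ^ (N - k) * (x + 1) ^ k * x ^ (N - k) = 1 := by
  calc ∑ k ∈ range (N + 1), (N.choose k : R) * (-1) ^ (N - k) * (x + 1) ^ k * x ^ (N - k)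
      = ∑ k ∈ range (N + 1), (x + 1) ^ k * (-x) ^ (N - k) * N.choose k :=
        sum_congr rfl fun k _ => by rw [neg_pow]; ring
    _ = ((x + 1) + -x) ^ N := (add_pow _ _ N).symm
    _ = 1 := by rw [add_neg_cancel_comm, one_pow]

theorem sum_choose_sub_mul_neg_one_pow_mul_add_one_pow_mul_pow (x : R) {j n : ℕ} (hjn : j ≤ n) :
    ∑ k ∈ range (n + 1),
      ((n - j).choose k : R) * (-1) ^ (n - j - k) * (x + 1) ^ k * x ^ (n - k) = x ^ j := by
  have hsub : range (n - j + 1) ⊆ range (n + 1) := range_subset_range.mpr (by omega)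
  rw [← sum_subset hsub fun k _ hk => by
    rw [Nat.choose_eq_zero_of_lt (by simpa using hk), Nat.cast_zero, zero_mul, zero_mul, zero_mul]]
  calc ∑ k ∈ range (n - j + 1),
        ((n - j).choose k : R) * (-1) ^ (n - j - k) * (x + 1) ^ k * x ^ (n - k)
      = (∑ k ∈ range (n - j + 1),
          ((n - j).choose k : R) * (-1) ^ (n - j - k) * (x + 1) ^ k * x ^ (n - j - k)) * x ^ j := by
        rw [sum_mul]
        refine sum_congr rfl fun k hk => ?_
        rw [show n - k = (n - j - k) + j by simp at hk; omega, pow_add]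
        ring
    _ = x ^ j := by rw [sum_choose_mul_neg_one_pow_mul_add_one_pow_mul_pow, one_mul]

end Binomial

theorem fubini_poly_eq_eulerian_sum_general (p : ℕ) (n : ℕ) (x : ℝ) :
    FubPoly p n x =
      ∑ k ∈ Finset.range (n + 1), (EulerNum p n k : ℝ) * (x + 1) ^ k * x ^ (n - k) := by
  calc FubPoly p n x
      = ∑ j ∈ range (n + 1), (j.factorial * Sp p n j : ℝ) * ∑ k ∈ range (n + 1),
          ((n - j).choose k : ℝ) * (-1) ^ (n - j - k) * (x + 1) ^ k * x ^ (n - k) := by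
        refine sum_congr rfl fun j hj => ?_
        rw [sum_choose_sub_mul_neg_one_pow_mul_add_one_pow_mul_pow x
          (Nat.lt_succ_iff.mp (mem_range.mp hj))]
        ring
    _ = ∑ k ∈ range (n + 1), (EulerNum p n k : ℝ) * (x + 1) ^ k * x ^ (n - k) := by
        simp_rw [EulerNum, Int.cast_sum, mul_sum, sum_mul]
        rw [sum_comm]
        push_cast
        exact sum_congr rfl fun k _ => sum_congr rfl fun j _ => by ring

/-- `F_n^p(x) = ∑_{k=0}^n A^p_{n,k} (x+1)^k x^{n-k}`. -/
theorem fubini_poly_eq_eulerian_sum (p : ℕ) (hp : 1 ≤ p) (n : ℕ) (x : ℝ) :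
    FubPoly p n x =
      ∑ k ∈ Finset.range (n + 1), (EulerNum p n k : ℝ) * (x + 1) ^ k * x ^ (n - k) :=
  fubini_poly_eq_eulerian_sum_general p n x
end

section
/- For every integer p ≥ 1, every n ≥ 0, and every real x ≠ 0: F_n^p(x) = x^n·A_n^p((x+1)/x), where A_n^p(y) := Σ_{m=0}^n A^p_{n,m}·y^m is the n-th higher order Eulerian polynomial. -/
/-- Higher order Eulerian polynomials: `A_n^p(y) = ∑_{m=0}^n A^p_{n,m} y^m`. -/
noncomputable def EulerPoly (p n : ℕ) (y : ℝ) : ℝ :=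
  ∑ m ∈ Finset.range (n + 1), (EulerNum p n m : ℝ) * y ^ m

/-! Summing first over `m`, the binomial theorem turns `A_n^p(y)` into
`∑_k k! S^p_{n,k} (y - 1)^(n-k)`. At `y = (x + 1) / x` we have `y - 1 = x⁻¹`, so multiplying
by `x^n` leaves `∑_k k! S^p_{n,k} x^k = F_n^p(x)`. -/

open Finset

theorem sum_range_choose_mul_neg_one_pow_mul_pow {R : Type*} [CommRing R] {j N : ℕ}
    (hj : j ≤ N) (y : R) :
    ∑ m ∈ range (N + 1), (j.choose m : R) * (-1) ^ (j - m) * y ^ m = (y - 1) ^ j := by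
  have hvanish : ∀ m ∈ range (N + 1), m ∉ range (j + 1) →
      (j.choose m : R) * (-1) ^ (j - m) * y ^ m = 0 := fun m _ hm => by
    rw [Nat.choose_eq_zero_of_lt (by simpa using hm), Nat.cast_zero, zero_mul, zero_mul]
  rw [← sum_subset (range_subset_range.2 (by omega)) hvanish, sub_eq_add_neg, add_pow]
  exact sum_congr rfl fun m _ => by ring

theorem eulerPoly_eq_sum_sub_one_pow (p n : ℕ) (y : ℝ) :
    EulerPoly p n y = ∑ k ∈ range (n + 1), (k.factorial * Sp p n k : ℝ) * (y - 1) ^ (n - k) := by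
  unfold EulerPoly EulerNum
  push_cast
  simp_rw [sum_mul]
  rw [sum_comm]
  refine sum_congr rfl fun k _ => ?_
  rw [← sum_range_choose_mul_neg_one_pow_mul_pow (Nat.sub_le n k), mul_sum]
  exact sum_congr rfl fun m _ => by rw [Nat.sub_right_comm]; ring

theorem pow_mul_inv_pow_sub {G₀ : Type*} [CommGroupWithZero G₀] {x : G₀} (hx : x ≠ 0) {k n : ℕ}
    (hk : k ≤ n) : x ^ n * x⁻¹ ^ (n - k) = x ^ k := by
  rw [inv_pow, ← pow_sub₀ x hx (Nat.sub_le n k), Nat.sub_sub_self hk]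

theorem fubini_poly_eq_eulerian_poly_general (p : ℕ) (n : ℕ) (x : ℝ) (hx : x ≠ 0) :
    FubPoly p n x = x ^ n * EulerPoly p n ((x + 1) / x) := by
  have hy : (x + 1) / x - 1 = x⁻¹ := by field_simp; ring
  rw [eulerPoly_eq_sum_sub_one_pow, hy, mul_sum]
  refine sum_congr rfl fun k hk => ?_
  rw [mul_left_comm, pow_mul_inv_pow_sub hx (Nat.lt_succ_iff.1 (mem_range.1 hk))]
  ring

/-- `F_n^p(x) = x^n · A_n^p((x+1)/x)` for `x ≠ 0`. -/
theorem fubini_poly_eq_eulerian_poly (p : ℕ) (hp : 1 ≤ p) (n : ℕ) (x : ℝ) (hx : x ≠ 0) :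
    FubPoly p n x = x ^ n * EulerPoly p n ((x + 1) / x) :=
  fubini_poly_eq_eulerian_poly_general p n x hx
end
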